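/- With g the hat function g(x) = min(2x, 2(1-x)) on [0,1] and g_s its s-fold composition, the partial sum f_L(x) = x - Σ_{s=1}^{L} 4^{-s} g_s(x) interpolates x² at all dyadic points k·2^{-L} for k = 0, 1, …, 2^L, i.e., f_L(k·2^{-L}) = (k·2^{-L})². -/
import Mathlib


/-- The hat function on [0,1]. -/
noncomputable def g (x : ℝ) : ℝ := min (2 * x) (2 * (1 - x))

lemma g_id (x : ℝ) : 2 * g x - (g x)^2 = 4*x - 4*x^2 := by
  unfold g
  rcases le_total (2*x) (2*(1-x)) with h|h
  · rw [min_eq_left h]; ring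
  · rw [min_eq_right h]; ring

lemma telgarsky_main (L : ℕ) (hL : 1 ≤ L) : ∀ k : ℕ, k ≤ 2^L →
    ((k:ℝ) * (2:ℝ)^(-(L:ℤ))) - ∑ s ∈ Finset.Icc 1 L,
        (4:ℝ)^(-(s:ℤ)) * g^[s] ((k:ℝ) * (2:ℝ)^(-(L:ℤ)))
      = ((k:ℝ) * (2:ℝ)^(-(L:ℤ)))^2 := by
  induction L, hL using Nat.le_induction with
  | base =>
    intro k hk
    interval_cases k <;> norm_num [g]
  | succ L hL ih =>
    intro k hk
    have hpow : (2:ℕ)^(L+1) = 2 * 2^L := by ring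
    set x : ℝ := (k:ℝ) * (2:ℝ)^(-((L+1:ℕ):ℤ)) with hx
    set k' : ℕ := min k (2^(L+1) - k) with hk'def
    have hk'le : k' ≤ 2^L := by
      rcases le_total k (2^L) with h|h
      · exact le_trans (min_le_left _ _) h
      · refine le_trans (min_le_right _ _) (by omega)
    set y : ℝ := (k':ℝ) * (2:ℝ)^(-(L:ℤ)) with hy
    have h2L : (2:ℝ)^(-((L+1:ℕ):ℤ)) * 2 = (2:ℝ)^(-(L:ℤ)) := by
      push_cast
      rw [neg_add, zpow_add₀ (by norm_num : (2:ℝ) ≠ 0)]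
      norm_num
      ring
    have htwo : (2:ℝ)^(((L+1):ℕ):ℤ) * (2:ℝ)^(-(((L+1):ℕ)):ℤ) = 1 := by
      rw [← zpow_add₀ (by norm_num : (2:ℝ) ≠ 0), add_neg_cancel, zpow_zero]
    have hg : g x = y := by
      unfold g
      have h1 : 2 * x = (k:ℝ) * (2:ℝ)^(-(L:ℤ)) := by
        rw [hx]; rw [← h2L]; ring
      have h2 : 2 * (1 - x) = ((2^(L+1) - k : ℕ):ℝ) * (2:ℝ)^(-(L:ℤ)) := by
        have hc : ((2^(L+1) - k : ℕ):ℝ) = (2:ℝ)^((L+1:ℕ):ℤ) - (k:ℝ) := by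
          rw [Nat.cast_sub hk, zpow_natCast]
          push_cast
          ring
        rw [hc, hx, sub_mul, ← h2L]
        have : (2:ℝ)^(((L+1):ℕ):ℤ) * ((2:ℝ)^(-(((L+1):ℕ)):ℤ) * 2) = 2 := by
          rw [← mul_assoc, htwo]; ring
        nlinarith [this]
      rw [h1, h2, ← min_mul_of_nonneg _ _ (by positivity : (0:ℝ) ≤ (2:ℝ)^(-(L:ℤ)))]
      rw [hy, hk'def, Nat.cast_min]
    have hIH := ih k' hk'le
    rw [← hy] at hIH
    -- rewrite the big sum
    have hshift : ∀ (M : ℕ) (F : ℕ → ℝ), ∑ s ∈ Finset.Icc 1 M, F s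
        = ∑ i ∈ Finset.range M, F (1 + i) := by
      intro M F
      rw [← Finset.Ico_add_one_right_eq_Icc, Finset.sum_Ico_eq_sum_range]
      simp
    have hsum : ∑ s ∈ Finset.Icc 1 (L+1), (4:ℝ)^(-(s:ℤ)) * g^[s] x
        = (1/4) * (∑ s ∈ Finset.Icc 1 L, (4:ℝ)^(-(s:ℤ)) * g^[s] y) + (1/4) * y := by
      rw [hshift]
      have hterm : ∀ i : ℕ, (4:ℝ)^(-((1 + i : ℕ):ℤ)) * g^[1 + i] x
          = (1/4) * ((4:ℝ)^(-(i:ℤ)) * g^[i] y) := by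
        intro i
        have h4 : (4:ℝ)^(-((1 + i : ℕ):ℤ)) = (1/4) * (4:ℝ)^(-(i:ℤ)) := by
          push_cast
          rw [neg_add, zpow_add₀ (by norm_num : (4:ℝ) ≠ 0)]
          norm_num
        have hit : g^[1 + i] x = g^[i] y := by
          rw [Nat.add_comm, Function.iterate_succ_apply, hg]
        rw [h4, hit]; ring
      rw [Finset.sum_congr rfl (fun i _ => hterm i)]
      rw [Finset.sum_range_succ']
      simp only [Function.iterate_zero_apply]
      rw [hshift L (fun s => (4:ℝ)^(-(s:ℤ)) * g^[s] y), Finset.mul_sum]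
      have : ∀ i ∈ Finset.range L, (1/4) * ((4:ℝ)^(-((i+1:ℕ):ℤ)) * g^[i+1] y)
          = (1/4) * ((4:ℝ)^(-((1+i:ℕ):ℤ)) * g^[1+i] y) := by
        intro i _
        rw [Nat.add_comm i 1]
      rw [Finset.sum_congr rfl this]
      norm_num
    rw [hsum]
    have hgid := g_id x
    rw [hg] at hgid
    nlinarith [hIH, hgid]

theorem telgarsky_interpolation (L : ℕ) (hL : 1 ≤ L) (k : ℕ) (hk : k ≤ 2^L) :
    (k * (2:ℝ)^(-(L:ℤ))) - ∑ s ∈ Finset.Icc 1 L,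
        (4:ℝ)^(-(s:ℤ)) * g^[s] (k * (2:ℝ)^(-(L:ℤ)))
      = (k * (2:ℝ)^(-(L:ℤ)))^2 := by
  exact telgarsky_main L hL k hk
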